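/- arXiv:2208.11945 — 2 statements merged into one kernel-verified Lean document; each statement's English description precedes it below -/
import Mathlib

section
/- Let w, Δw, x ∈ ℝ with w + Δw ≠ 0, and let f ∈ ℝ. Define error(Δx) = (w + Δw)·Δx + Δw·x and B(x) = Δw·x/(w + Δw) + 1/2. If f > B(x), then error(1 - f)² < error(-f)². -/
theorem stmt_2 (w dw x f : ℝ) (h : w + dw ≠ 0)
    (error : ℝ → ℝ) (herr : ∀ dx, error dx = (w + dw) * dx + dw * x)
    (B : ℝ) (hB : B = dw * x / (w + dw) + 1 / 2)
    (hf : f > B) :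
    error (1 - f) ^ 2 < error (-f) ^ 2 := by
  rw [herr, herr]
  have hr : dw * x = (dw * x / (w + dw)) * (w + dw) := (div_mul_cancel₀ _ h).symm
  have hsq : 0 < (w + dw) ^ 2 := by positivity
  subst hB
  rw [hr]
  nlinarith [mul_pos hsq (sub_pos.mpr hf)]
end

section
/- Let w, Δw, x ∈ ℝ with w + Δw ≠ 0, 0 ≤ f ≤ 1, and error(Δx) = (w + Δw)·Δx + Δw·x. Then min(error(-f)², error(1-f)²) over the two rounding choices is minimized (as a function of the choice) exactly according to whether f is below or above B(x) = Δw·x/(w+Δw) + 1/2; i.e., the rounding choice argmin_{Δx ∈ {-f, 1-f}} error(Δx)² equals -f if f < B(x) and equals 1 - f if f > B(x). -/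
theorem stmt_4 (w dw x f : ℝ) (h : w + dw ≠ 0) (hf0 : 0 ≤ f) (hf1 : f ≤ 1)
    (error : ℝ → ℝ) (herr : ∀ dx, error dx = (w + dw) * dx + dw * x)
    (B : ℝ) (hB : B = dw * x / (w + dw) + 1 / 2) :
    (f < B → error (-f) ^ 2 < error (1 - f) ^ 2) ∧
    (f > B → error (1 - f) ^ 2 < error (-f) ^ 2) := by
  have hsq : (w + dw) ^ 2 > 0 := by positivity
  rw [herr, herr]
  set q := dw * x / (w + dw) with hqdef
  have hq : dw * x = q * (w + dw) := (div_mul_cancel₀ _ h).symm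
  subst hB
  rw [hq]
  constructor <;> intro hlt
  · nlinarith [mul_pos hsq (by linarith : (0:ℝ) < q + 1 / 2 - f)]
  · nlinarith [mul_pos hsq (by linarith : (0:ℝ) < f - (q + 1 / 2))]
end
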